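/- arXiv:0910.5394 — 2 statements merged into one kernel-verified Lean document; each statement's English description precedes it below -/
import Mathlib

section
/- Let D = ⋂_{i=1}^p D_i ⊆ ℝ^m with each D_i closed, and let x ∈ ∂D. Suppose that for each i with x ∈ ∂D_i there is a unit vector n_i(x) and a constant α_i > 0 such that (y − x)·n_i(x) + |y − x|²/(2α_i) ≥ 0 for every y ∈ D_i (exterior sphere restricted at x). Let β₀ > 0, let c_i ≥ 0 (for i with x ∈ ∂D_i) satisfy Σ c_i ≤ 1/β₀, and suppose that n := Σ_{i: x∈∂D_i} c_i n_i(x) is a unit vector. Then n ∈ N^D_{x,α} with α = β₀ · min_{i: x∈∂D_i} α_i, i.e. (y − x)·n + |y − x|²/(2α) ≥ 0 for every y ∈ D. -/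
/-! Each active constraint gives `⟪y - x, nᵢ⟫ ≥ -‖y - x‖² / (2 αᵢ) ≥ -‖y - x‖² / (2 min α)`.
Summing with weights `cᵢ ≥ 0` of total at most `1 / β₀` yields the same inequality for
`n = ∑ cᵢ nᵢ` with constant `β₀ · min α`; for a unit vector `n`, expanding
`‖(y - x) + α n‖² < α²` shows that this inequality says exactly that no `y ∈ D` lies in the
ball of radius `α` about `x - α n`. -/

open scoped RealInnerProductSpace

/-- The set of inward unit normal vectors to `D` at `x` with constant `α`:
unit vectors `n` such that the open ball of radius `α` centered at `x − αn` misses `D`. -/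
def normalSet {m : ℕ} (D : Set (EuclideanSpace ℝ (Fin m))) (x : EuclideanSpace ℝ (Fin m))
    (α : ℝ) : Set (EuclideanSpace ℝ (Fin m)) :=
  {v | ‖v‖ = 1 ∧ Metric.ball (x - α • v) α ∩ D = ∅}

open Finset

theorem mem_normalSet_of_inner_add_div_nonneg {m : ℕ} {D : Set (EuclideanSpace ℝ (Fin m))}
    {x v : EuclideanSpace ℝ (Fin m)} {α : ℝ} (hv : ‖v‖ = 1) (hα : 0 < α)
    (h : ∀ y ∈ D, 0 ≤ ⟪y - x, v⟫ + ‖y - x‖ ^ 2 / (2 * α)) :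
    v ∈ normalSet D x α := by
  refine ⟨hv, Set.eq_empty_iff_forall_notMem.mpr ?_⟩
  rintro y ⟨hball, hy⟩
  have hlt : ‖(y - x) + α • v‖ < α := by
    rw [Metric.mem_ball, dist_eq_norm] at hball
    rwa [show y - (x - α • v) = (y - x) + α • v by abel] at hball
  have hexpand : ‖(y - x) + α • v‖ ^ 2 = ‖y - x‖ ^ 2 + 2 * α * ⟪y - x, v⟫ + α ^ 2 := by
    rw [norm_add_sq_real, real_inner_smul_right, norm_smul, Real.norm_of_nonneg hα.le, hv]
    ring
  have hneg : ‖y - x‖ ^ 2 + 2 * α * ⟪y - x, v⟫ < 0 := by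
    nlinarith [norm_nonneg ((y - x) + α • v)]
  have hnonneg : 0 ≤ ‖y - x‖ ^ 2 + 2 * α * ⟪y - x, v⟫ := by
    have := mul_nonneg (by positivity : (0 : ℝ) ≤ 2 * α) (h y hy)
    rwa [mul_add, mul_div_cancel₀ _ (by positivity), add_comm] at this
  linarith

section InnerProductSpace

variable {E ι : Type*} [NormedAddCommGroup E] [InnerProductSpace ℝ E]

theorem inner_sum_smul_add_div_nonneg (s : Finset ι) {u : E} {n : ι → E} {c α : ι → ℝ}
    {a β : ℝ} (ha : 0 < a) (hβ : 0 < β) (hc : ∀ i ∈ s, 0 ≤ c i) (hαa : ∀ i ∈ s, a ≤ α i)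
    (hcsum : ∑ i ∈ s, c i ≤ 1 / β) (h : ∀ i ∈ s, 0 ≤ ⟪u, n i⟫ + ‖u‖ ^ 2 / (2 * α i)) :
    0 ≤ ⟪u, ∑ i ∈ s, c i • n i⟫ + ‖u‖ ^ 2 / (2 * (β * a)) := by
  set r := ‖u‖ ^ 2 / (2 * a)
  have hr : 0 ≤ r := by positivity
  have hterm : ∀ i ∈ s, -(c i * r) ≤ c i * ⟪u, n i⟫ := fun i hi => by
    have : ‖u‖ ^ 2 / (2 * α i) ≤ r :=
      div_le_div_of_nonneg_left (sq_nonneg _) (by positivity) (by linarith [hαa i hi])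
    nlinarith [hc i hi, h i hi]
  calc 0 = -((1 / β) * r) + ‖u‖ ^ 2 / (2 * (β * a)) := by
        simp only [r]
        field_simp
        ring
    _ ≤ -((∑ i ∈ s, c i) * r) + ‖u‖ ^ 2 / (2 * (β * a)) := by gcongr
    _ ≤ ⟪u, ∑ i ∈ s, c i • n i⟫ + ‖u‖ ^ 2 / (2 * (β * a)) := by
        rw [sum_mul, ← sum_neg_distrib, inner_sum]
        simp only [real_inner_smul_right]
        gcongr with i hi
        exact hterm i hi

end InnerProductSpace

theorem stmt_4_general {m p : ℕ}
    (D : Fin p → Set (EuclideanSpace ℝ (Fin m)))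
    (x : EuclideanSpace ℝ (Fin m))
    (nv : Fin p → EuclideanSpace ℝ (Fin m)) (α : Fin p → ℝ)
    (hα : ∀ i, x ∈ frontier (D i) → 0 < α i)
    (hsphere : ∀ i, x ∈ frontier (D i) →
      ∀ y ∈ D i, ⟪y - x, nv i⟫ + ‖y - x‖ ^ 2 / (2 * α i) ≥ 0)
    (β₀ : ℝ) (hβ₀ : 0 < β₀)
    (c : Fin p → ℝ) (hc : ∀ i, x ∈ frontier (D i) → 0 ≤ c i)
    (hcsupp : ∀ i, x ∉ frontier (D i) → c i = 0)
    (hcsum : ∑ i, c i ≤ 1 / β₀)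
    (hn : ‖∑ i, c i • nv i‖ = 1) :
    (∑ i, c i • nv i) ∈
      normalSet (⋂ i, D i) x (β₀ * sInf {a : ℝ | ∃ i, x ∈ frontier (D i) ∧ a = α i}) := by
  classical
  set S := {a : ℝ | ∃ i, x ∈ frontier (D i) ∧ a = α i}
  set A := univ.filter fun i => x ∈ frontier (D i)
  have hactive : ∀ i, c i ≠ 0 → x ∈ frontier (D i) := fun i h => not_not.mp (h ∘ hcsupp i)
  have hSfin : S.Finite := (Set.finite_range α).subset fun _ ⟨i, _, hi⟩ => ⟨i, hi.symm⟩
  -- `S` is nonempty because the unit vector `∑ i, c i • nv i` has a nonzero term.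
  obtain ⟨i₀, -, hi₀⟩ := exists_ne_zero_of_sum_ne_zero (ne_zero_of_norm_ne_zero (hn ▸ one_ne_zero))
  have hS : S.Nonempty := ⟨α i₀, i₀, hactive i₀ (left_ne_zero_of_smul hi₀), rfl⟩
  obtain ⟨j, hj, hSj⟩ := hS.csInf_mem hSfin
  have hSpos : 0 < sInf S := hSj ▸ hα j hj
  have hsum_nv : ∑ i ∈ A, c i • nv i = ∑ i, c i • nv i :=
    sum_filter_of_ne fun i _ h => hactive i (left_ne_zero_of_smul h)
  have hsum_c : ∑ i ∈ A, c i = ∑ i, c i := sum_filter_of_ne fun i _ => hactive i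
  refine mem_normalSet_of_inner_add_div_nonneg hn (mul_pos hβ₀ hSpos) fun y hy => ?_
  rw [← hsum_nv]
  exact inner_sum_smul_add_div_nonneg A hSpos hβ₀ (fun i hi => hc i (mem_filter.mp hi).2)
    (fun i hi => csInf_le hSfin.bddBelow ⟨i, (mem_filter.mp hi).2, rfl⟩) (hsum_c ▸ hcsum)
    fun i hi => hsphere i (mem_filter.mp hi).2 y (Set.mem_iInter.mp hy i)

/-- Let `D = ⋂ᵢ Dᵢ ⊆ ℝ^m` with each `Dᵢ` closed and `x ∈ ∂D`. If for each `i`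
with `x ∈ ∂Dᵢ` there are a unit vector `nᵢ(x)` and `αᵢ > 0` with
`(y−x)·nᵢ(x) + |y−x|²/(2αᵢ) ≥ 0` for all `y ∈ Dᵢ`, and if `cᵢ ≥ 0` (supported on the active
indices) satisfy `Σ cᵢ ≤ 1/β₀` and `n = Σ cᵢ nᵢ(x)` is a unit vector, then
`n ∈ N^D_{x,α}` with `α = β₀ · min·{αᵢ : x ∈ ∂Dᵢ}`. -/
theorem stmt_4 {m p : ℕ} (hm : 2 ≤ m)
    (D : Fin p → Set (EuclideanSpace ℝ (Fin m))) (hD : ∀ i, IsClosed (D i))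
    (x : EuclideanSpace ℝ (Fin m)) (hx : x ∈ frontier (⋂ i, D i))
    (nv : Fin p → EuclideanSpace ℝ (Fin m)) (α : Fin p → ℝ)
    (hα : ∀ i, x ∈ frontier (D i) → 0 < α i)
    (hunit : ∀ i, x ∈ frontier (D i) → ‖nv i‖ = 1)
    (hsphere : ∀ i, x ∈ frontier (D i) →
      ∀ y ∈ D i, ⟪y - x, nv i⟫ + ‖y - x‖ ^ 2 / (2 * α i) ≥ 0)
    (β₀ : ℝ) (hβ₀ : 0 < β₀)
    (c : Fin p → ℝ) (hc : ∀ i, x ∈ frontier (D i) → 0 ≤ c i)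
    (hcsupp : ∀ i, x ∉ frontier (D i) → c i = 0)
    (hcsum : ∑ i, c i ≤ 1 / β₀)
    (hn : ‖∑ i, c i • nv i‖ = 1) :
    (∑ i, c i • nv i) ∈
      normalSet (⋂ i, D i) x (β₀ * sInf {a : ℝ | ∃ i, x ∈ frontier (D i) ∧ a = α i}) :=
  stmt_4_general D x nv α hα hsphere β₀ hβ₀ c hc hcsupp hcsum hn
end

section
/- (Inheritance criterion, normal cone characterization.) Under hypotheses (i)–(iv) on D = ⋂_{i=1}^p D_i, for every x ∈ ∂D the set of inward unit normal vectors satisfies N^D_x = { n ∈ ℝ^m : |n| = 1 and n = Σ_{i: x ∈ ∂D_i} c_i n_i(x) for some coefficients c_i ≥ 0 }. -/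
/-!
Both sides are described by the proximal-normal inequality `⟪y - x, v⟫ ≥ -K ‖y - x‖²` for
`y ∈ D`. Each active `nᵢ(x)` satisfies it by the exterior sphere condition (ii), and the
inequality is preserved by nonnegative combinations. Conversely, such a `v` has `⟪z, v⟫ ≥ 0`
whenever `⟪z, nᵢ(x)⟫ > 0` for all active `i`, because the interior cone condition (i) then puts
`x + t z` in `D` for small `t > 0`. The vector `l` of (iv) makes these directions dense in the dual
of the active normals and makes the cone they generate closed, so Farkas' lemma writes `v` as a
nonnegative combination of them.
-/

open scoped RealInnerProductSpace

/-- The set `N^D_x = ⋃_{α>0} N^D_{x,α}` of inward unit normal vectors to `D` at `x`. -/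
def normalCone {m : ℕ} (D : Set (EuclideanSpace ℝ (Fin m))) (x : EuclideanSpace ℝ (Fin m)) :
    Set (EuclideanSpace ℝ (Fin m)) :=
  ⋃ α ∈ Set.Ioi (0 : ℝ), normalSet D x α

/-- `D` satisfies the Uniform Exterior Sphere property with constant `α`. -/
def UES {m : ℕ} (D : Set (EuclideanSpace ℝ (Fin m))) (α : ℝ) : Prop :=
  ∀ x ∈ frontier D, normalCone D x = normalSet D x α ∧ (normalSet D x α).Nonempty

/-- `D` satisfies the Uniform Normal Cone property with constants `β`, `δ`. -/
def UNC {m : ℕ} (D : Set (EuclideanSpace ℝ (Fin m))) (β δ : ℝ) : Prop :=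
  ∀ x ∈ frontier D, ∃ l : EuclideanSpace ℝ (Fin m), ‖l‖ = 1 ∧
    ∀ y ∈ frontier D, ‖y - x‖ ≤ δ → ∀ v ∈ normalCone D y, ⟪v, l⟫ ≥ Real.sqrt (1 - β ^ 2)

open Filter Topology

section InnerProductSpace

variable {E : Type*} [NormedAddCommGroup E] [InnerProductSpace ℝ E]

def proximalNormals (S : Set E) (x : E) : Set E :=
  {v | ∃ K : ℝ, ∀ y ∈ S, -(K * ‖y - x‖ ^ 2) ≤ ⟪y - x, v⟫}

def nonnegCombinations {ι : Type*} [Fintype ι] (P : ι → Prop) (w : ι → E) : Set E :=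
  {u | ∃ c : ι → ℝ, (∀ i, 0 ≤ c i) ∧ (∀ i, ¬P i → c i = 0) ∧ u = ∑ i, c i • w i}

lemma notMem_ball_sub_smul_iff {x v y : E} {a : ℝ} (ha : 0 < a) (hv : ‖v‖ = 1) :
    y ∉ Metric.ball (x - a • v) a ↔ -‖y - x‖ ^ 2 ≤ 2 * a * ⟪y - x, v⟫ := by
  have hsq : ‖y - (x - a • v)‖ ^ 2 = ‖y - x‖ ^ 2 + 2 * a * ⟪y - x, v⟫ + a ^ 2 := by
    rw [show y - (x - a • v) = (y - x) + a • v by abel, norm_add_sq_real, real_inner_smul_right,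
      norm_smul, hv, Real.norm_of_nonneg ha.le]
    ring
  rw [Metric.mem_ball, dist_eq_norm, not_lt,
    ← pow_le_pow_iff_left₀ ha.le (norm_nonneg _) two_ne_zero, hsq]
  constructor <;> intro h <;> linarith

lemma proximalNormals_anti {S T : Set E} (hST : S ⊆ T) (x : E) :
    proximalNormals T x ⊆ proximalNormals S x :=
  fun _ ⟨K, hK⟩ => ⟨K, fun y hy => hK y (hST hy)⟩

lemma mem_proximalNormals_of_ball_inter_eq_empty {S : Set E} {x v : E} {a : ℝ} (ha : 0 < a)
    (hv : ‖v‖ = 1) (hball : Metric.ball (x - a • v) a ∩ S = ∅) : v ∈ proximalNormals S x := by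
  refine ⟨1 / (2 * a), fun y hy => ?_⟩
  have h := (notMem_ball_sub_smul_iff ha hv).1 fun hy' => hball.subset ⟨hy', hy⟩
  rw [div_mul_eq_mul_div, one_mul, ← neg_div, div_le_iff₀ (by positivity)]
  linarith

lemma nonnegCombinations_subset_proximalNormals {ι : Type*} [Fintype ι] {P : ι → Prop}
    {w : ι → E} {S : Set E} {x : E} (hw : ∀ i, P i → w i ∈ proximalNormals S x) :
    nonnegCombinations P w ⊆ proximalNormals S x := by
  rintro _ ⟨c, hc, hcP, rfl⟩
  have hK : ∀ i, ∃ K : ℝ, ∀ y ∈ S, -(c i * K * ‖y - x‖ ^ 2) ≤ c i * ⟪y - x, w i⟫ := by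
    intro i
    by_cases hi : P i
    · obtain ⟨K, hK⟩ := hw i hi
      exact ⟨K, fun y hy => by nlinarith [mul_le_mul_of_nonneg_left (hK y hy) (hc i)]⟩
    · exact ⟨0, by simp [hcP i hi]⟩
  choose K hK using hK
  refine ⟨∑ i, c i * K i, fun y hy => ?_⟩
  rw [inner_sum, Finset.sum_mul, ← Finset.sum_neg_distrib]
  exact Finset.sum_le_sum fun i _ => by rw [real_inner_smul_right]; exact hK i y hy

lemma inner_nonneg_of_mem_proximalNormals {S : Set E} {x v z : E}
    (hv : v ∈ proximalNormals S x) (hz : ∀ᶠ t in 𝓝[>] (0 : ℝ), x + t • z ∈ S) :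
    0 ≤ ⟪z, v⟫ := by
  obtain ⟨K, hK⟩ := hv
  have hlim : Tendsto (fun t : ℝ => -(K * t * ‖z‖ ^ 2)) (𝓝[>] 0) (𝓝 0) := by
    have hcont : Continuous fun t : ℝ => -(K * t * ‖z‖ ^ 2) := by fun_prop
    simpa using (hcont.tendsto 0).mono_left nhdsWithin_le_nhds
  refine le_of_tendsto hlim ?_
  filter_upwards [hz, self_mem_nhdsWithin] with t ht (htpos : 0 < t)
  have h := hK _ ht
  rw [add_sub_cancel_left, norm_smul, real_inner_smul_left, Real.norm_of_nonneg htpos.le] at h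
  refine le_of_mul_le_mul_left ?_ htpos
  linarith

lemma eventually_add_smul_mem_of_mem_interior {S : Set E} {x : E} (hx : x ∈ interior S)
    (z : E) : ∀ᶠ t in 𝓝[>] (0 : ℝ), x + t • z ∈ S := by
  have hlim : Tendsto (fun t : ℝ => x + t • z) (𝓝 0) (𝓝 x) := by
    have hcont : Continuous fun t : ℝ => x + t • z := by fun_prop
    simpa using hcont.tendsto 0
  exact (hlim.eventually (mem_interior_iff_mem_nhds.1 hx)).filter_mono nhdsWithin_le_nhds

lemma eventually_add_smul_mem_of_interior_cone {S : Set E} {x n z : E}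
    (hcone : ∀ ε > (0 : ℝ), ∃ δ > (0 : ℝ), ∀ y : E, ‖y‖ ≤ δ → ⟪y, n⟫ ≥ ε * ‖y‖ → x + y ∈ S)
    (hz : 0 < ⟪z, n⟫) : ∀ᶠ t in 𝓝[>] (0 : ℝ), x + t • z ∈ S := by
  have hz₀ : 0 < ‖z‖ := norm_pos_iff.2 fun h => by simp [h] at hz
  obtain ⟨δ, hδ, hδS⟩ := hcone (⟪z, n⟫ / ‖z‖) (div_pos hz hz₀)
  filter_upwards [Ioc_mem_nhdsGT (div_pos hδ hz₀)] with t ⟨ht, htδ⟩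
  have hnorm : ‖t • z‖ = t * ‖z‖ := by rw [norm_smul, Real.norm_of_nonneg ht.le]
  refine hδS _ (hnorm ▸ (le_div_iff₀ hz₀).1 htδ) (le_of_eq ?_)
  rw [hnorm, real_inner_smul_left]
  field_simp

/-- Apply `hv` to `z + s • l` and let `s → 0⁺`. -/
lemma inner_nonneg_of_forall_inner_pos {ι : Type*} {P : ι → Prop} {w : ι → E} {l v : E}
    (hl : ∀ i, P i → 0 < ⟪l, w i⟫) (hv : ∀ z, (∀ i, P i → 0 < ⟪z, w i⟫) → 0 ≤ ⟪z, v⟫)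
    {z : E} (hz : ∀ i, P i → 0 ≤ ⟪z, w i⟫) : 0 ≤ ⟪z, v⟫ := by
  have hlim : Tendsto (fun s : ℝ => ⟪z + s • l, v⟫) (𝓝[>] 0) (𝓝 ⟪z, v⟫) := by
    have hcont : Continuous fun s : ℝ => ⟪z + s • l, v⟫ := by fun_prop
    simpa using (hcont.tendsto 0).mono_left nhdsWithin_le_nhds
  refine ge_of_tendsto hlim (eventually_nhdsWithin_of_forall fun s (hs : 0 < s) => hv _ ?_)
  intro i hi
  rw [inner_add_left, real_inner_smul_left]
  exact add_pos_of_nonneg_of_pos (hz i hi) (mul_pos hs (hl i hi))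

section nonnegCombinations

variable {ι : Type*} [Fintype ι] {P : ι → Prop} {w : ι → E} {l : E} {b : ℝ}

lemma mul_sum_le_inner_sum_smul (hw : ∀ i, P i → b ≤ ⟪l, w i⟫) {c : ι → ℝ}
    (hc : ∀ i, 0 ≤ c i) (hcP : ∀ i, ¬P i → c i = 0) :
    b * ∑ i, c i ≤ ⟪l, ∑ i, c i • w i⟫ := by
  rw [Finset.mul_sum, inner_sum]
  refine Finset.sum_le_sum fun i _ => ?_
  rw [real_inner_smul_right]
  by_cases hi : P i
  · rw [mul_comm]; exact mul_le_mul_of_nonneg_left (hw i hi) (hc i)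
  · simp [hcP i hi]

/-- The cone is closed because `l` bounds the coefficients of a point `u` by `‖l‖ ‖u‖ / b`, so
near any point it is the image of a compact set of coefficients. -/
lemma isClosed_nonnegCombinations (hb : 0 < b) (hw : ∀ i, P i → b ≤ ⟪l, w i⟫) :
    IsClosed (nonnegCombinations P w) := by
  classical
  refine isClosed_of_closure_subset fun u hu => ?_
  set r := ‖u‖ + 1
  set T : Set (ι → ℝ) :=
    Set.univ.pi fun i => if P i then Set.Icc 0 (‖l‖ * r / b) else {0}
  have hT : IsCompact T :=
    isCompact_univ_pi fun i => by split_ifs; exacts [isCompact_Icc, isCompact_singleton]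
  have hΦ : Continuous fun c : ι → ℝ => ∑ i, c i • w i := by fun_prop
  have hsub : Metric.ball 0 r ∩ nonnegCombinations P w ⊆ (fun c => ∑ i, c i • w i) '' T := by
    rintro _ ⟨hr, c, hc, hcP, rfl⟩
    refine ⟨c, fun i _ => ?_, rfl⟩
    by_cases hi : P i
    · simp only [if_pos hi]
      refine ⟨hc i, (le_div_iff₀ hb).2 ?_⟩
      calc c i * b ≤ b * ∑ j, c j := by
            rw [mul_comm]
            exact mul_le_mul_of_nonneg_left
              (Finset.single_le_sum (fun j _ => hc j) (Finset.mem_univ i)) hb.le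
        _ ≤ ⟪l, ∑ j, c j • w j⟫ := mul_sum_le_inner_sum_smul hw hc hcP
        _ ≤ ‖l‖ * ‖∑ j, c j • w j‖ := real_inner_le_norm _ _
        _ ≤ ‖l‖ * r := by
            gcongr
            simpa using (Metric.mem_ball.1 hr).le
    · simp [hi, hcP i hi]
  have himage : (fun c => ∑ i, c i • w i) '' T ⊆ nonnegCombinations P w := by
    rintro _ ⟨c, hcT, rfl⟩
    refine ⟨c, fun i => ?_, fun i hi => by simpa [hi] using hcT i (Set.mem_univ i), rfl⟩
    have h := hcT i (Set.mem_univ i)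
    by_cases hi : P i
    · simp only [hi, if_true, Set.mem_Icc] at h
      exact h.1
    · simp only [hi, if_false, Set.mem_singleton_iff] at h
      exact h.ge
  have hur : u ∈ Metric.ball 0 r ∩ closure (nonnegCombinations P w) :=
    ⟨by simp [r], hu⟩
  exact himage <| closure_minimal hsub (hT.image hΦ).isClosed <|
    Metric.isOpen_ball.inter_closure hur

/-- Farkas' lemma. -/
lemma mem_nonnegCombinations_of_forall_inner_nonneg [CompleteSpace E] (hb : 0 < b)
    (hw : ∀ i, P i → b ≤ ⟪l, w i⟫) {v : E}
    (hv : ∀ z, (∀ i, P i → 0 ≤ ⟪z, w i⟫) → 0 ≤ ⟪z, v⟫) : v ∈ nonnegCombinations P w := by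
  classical
  let C : ProperCone ℝ E :=
    { carrier := nonnegCombinations P w
      add_mem' := by
        rintro _ _ ⟨c, hc, hcP, rfl⟩ ⟨c', hc', hcP', rfl⟩
        refine ⟨c + c', fun i => add_nonneg (hc i) (hc' i), fun i hi => ?_, ?_⟩
        · simp [hcP i hi, hcP' i hi]
        · simp [add_smul, Finset.sum_add_distrib]
      zero_mem' := ⟨0, fun _ => le_rfl, fun _ _ => rfl, by simp⟩
      smul_mem' := by
        rintro ⟨t, ht⟩ _ ⟨c, hc, hcP, rfl⟩
        refine ⟨t • c, fun i => mul_nonneg ht (hc i), fun i hi => by simp [hcP i hi], ?_⟩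
        simp [Finset.smul_sum, smul_smul]
      isClosed' := isClosed_nonnegCombinations hb hw }
  have hwC : ∀ i, P i → w i ∈ C := fun i hi =>
    ⟨Pi.single i 1, fun j => by by_cases h : j = i <;> simp [h],
      fun j hj => Pi.single_eq_of_ne (by rintro rfl; exact hj hi) 1, by simp [Pi.single_apply]⟩
  by_contra hvC
  obtain ⟨y, hy, hyv⟩ := C.hyperplane_separation' hvC
  have h := hv y fun i hi => real_inner_comm (w i) y ▸ hy _ (hwC i hi)
  rw [real_inner_comm] at h
  linarith

end nonnegCombinations

end InnerProductSpace

lemma mem_normalCone_iff {m : ℕ} {D : Set (EuclideanSpace ℝ (Fin m))}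
    {x v : EuclideanSpace ℝ (Fin m)} :
    v ∈ normalCone D x ↔ ‖v‖ = 1 ∧ v ∈ proximalNormals D x := by
  simp only [normalCone, normalSet, Set.mem_iUnion, Set.mem_Ioi, Set.mem_ofPred_eq, exists_prop]
  constructor
  · rintro ⟨a, ha, hv, hball⟩
    exact ⟨hv, mem_proximalNormals_of_ball_inter_eq_empty ha hv hball⟩
  · rintro ⟨hv, K, hK⟩
    have hK' : 0 < |K| + 1 := by positivity
    refine ⟨1 / (2 * (|K| + 1)), by positivity, hv, Set.eq_empty_of_forall_notMem ?_⟩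
    rintro y ⟨hy, hyD⟩
    refine (notMem_ball_sub_smul_iff (by positivity) hv).2 ?_ hy
    have h2a : 2 * (1 / (2 * (|K| + 1))) = 1 / (|K| + 1) := by field_simp
    rw [h2a, one_div_mul_eq_div, le_div_iff₀ hK']
    nlinarith [hK y hyD, le_abs_self K, sq_nonneg ‖y - x‖]

theorem stmt_5_general {m p : ℕ}
    (D : Fin p → Set (EuclideanSpace ℝ (Fin m)))
    -- each `Dᵢ` is the closure of a nonempty open set
    (hDcl : ∀ i, ∃ U : Set (EuclideanSpace ℝ (Fin m)), IsOpen U ∧ U.Nonempty ∧ D i = closure U)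
    (nv : Fin p → EuclideanSpace ℝ (Fin m) → EuclideanSpace ℝ (Fin m))
    -- (i) distinguished unit normal vectors with the interior cone condition
    (hunit : ∀ i, ∀ x ∈ (⋂ j, D j) ∩ frontier (D i), ‖nv i x‖ = 1)
    (hcone : ∀ i, ∀ x ∈ (⋂ j, D j) ∩ frontier (D i), ∀ ε > (0 : ℝ), ∃ δ > (0 : ℝ),
      ∀ z : EuclideanSpace ℝ (Fin m), ‖z‖ ≤ δ → ⟪z, nv i x⟫ ≥ ε * ‖z‖ → x + z ∈ D i)
    -- (ii) uniform exterior sphere restricted to `D`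
    (α : Fin p → ℝ) (hα : ∀ i, 0 < α i)
    (hUESi : ∀ i, ∀ x ∈ (⋂ j, D j) ∩ frontier (D i),
      Metric.ball (x - α i • nv i x) (α i) ∩ D i = ∅)
    -- (iii) uniform normal cone restricted to `D`
    (β : Fin p → ℝ)
    (δ : Fin p → ℝ)
    -- (iv) compatibility
    (β₀ : ℝ) (hβ₀ : β₀ > Real.sqrt (2 * sSup (Set.range β)))
    (hcompat : ∀ x ∈ frontier (⋂ j, D j), ∃ l : EuclideanSpace ℝ (Fin m), ‖l‖ = 1 ∧
      ∀ i, x ∈ frontier (D i) → ⟪l, nv i x⟫ ≥ β₀) :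
    ∀ x ∈ frontier (⋂ j, D j),
      normalCone (⋂ j, D j) x =
        {v | ‖v‖ = 1 ∧ ∃ c : Fin p → ℝ, (∀ i, 0 ≤ c i) ∧
          (∀ i, x ∉ frontier (D i) → c i = 0) ∧ v = ∑ i, c i • nv i x} := by
  intro x hx
  have hclosed : IsClosed (⋂ j, D j) := isClosed_iInter fun i => by
    obtain ⟨U, -, -, hU⟩ := hDcl i
    exact hU ▸ isClosed_closure
  have hxD : x ∈ ⋂ j, D j := hclosed.frontier_subset hx
  obtain ⟨l, -, hl⟩ := hcompat x hx
  have hβ₀pos : 0 < β₀ := (Real.sqrt_nonneg _).trans_lt hβ₀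
  have hnormal : ∀ i, x ∈ frontier (D i) → nv i x ∈ proximalNormals (⋂ j, D j) x :=
    fun i hi => proximalNormals_anti (Set.iInter_subset D i) x <|
      mem_proximalNormals_of_ball_inter_eq_empty (hα i) (hunit i x ⟨hxD, hi⟩) (hUESi i x ⟨hxD, hi⟩)
  have hsegment : ∀ z, (∀ i, x ∈ frontier (D i) → 0 < ⟪z, nv i x⟫) →
      ∀ᶠ t in 𝓝[>] (0 : ℝ), x + t • z ∈ ⋂ j, D j := by
    intro z hz
    simp only [Set.mem_iInter]
    refine eventually_all.2 fun i => ?_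
    by_cases hi : x ∈ frontier (D i)
    · exact eventually_add_smul_mem_of_interior_cone (hcone i x ⟨hxD, hi⟩) (hz i hi)
    · have hxi : x ∈ interior (D i) := by
        by_contra h
        exact hi ⟨subset_closure (Set.mem_iInter.1 hxD i), h⟩
      exact eventually_add_smul_mem_of_mem_interior hxi z
  ext v
  rw [mem_normalCone_iff]
  refine and_congr_right fun _ => ⟨fun hv => ?_, fun hv => ?_⟩
  · refine mem_nonnegCombinations_of_forall_inner_nonneg hβ₀pos hl fun z hz => ?_
    exact inner_nonneg_of_forall_inner_pos (fun i hi => hβ₀pos.trans_le (hl i hi))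
      (fun z hz => inner_nonneg_of_mem_proximalNormals hv (hsegment z hz)) hz
  · exact nonnegCombinations_subset_proximalNormals hnormal hv

/-- Inheritance criterion, normal cone characterization. Under hypotheses
(i)–(iv) on `D = ⋂ᵢ Dᵢ`, for every `x ∈ ∂D` the inward unit normal vectors at `x` are exactly
the unit vectors which are nonnegative linear combinations of the active `nᵢ(x)`. -/
theorem stmt_5 {m p : ℕ} (hm : 2 ≤ m) (hp : 0 < p)
    (D : Fin p → Set (EuclideanSpace ℝ (Fin m)))
    -- each `Dᵢ` is the closure of a nonempty open set
    (hDcl : ∀ i, ∃ U : Set (EuclideanSpace ℝ (Fin m)), IsOpen U ∧ U.Nonempty ∧ D i = closure U)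
    (nv : Fin p → EuclideanSpace ℝ (Fin m) → EuclideanSpace ℝ (Fin m))
    -- (i) distinguished unit normal vectors with the interior cone condition
    (hunit : ∀ i, ∀ x ∈ (⋂ j, D j) ∩ frontier (D i), ‖nv i x‖ = 1)
    (hcone : ∀ i, ∀ x ∈ (⋂ j, D j) ∩ frontier (D i), ∀ ε > (0 : ℝ), ∃ δ > (0 : ℝ),
      ∀ z : EuclideanSpace ℝ (Fin m), ‖z‖ ≤ δ → ⟪z, nv i x⟫ ≥ ε * ‖z‖ → x + z ∈ D i)
    -- (ii) uniform exterior sphere restricted to `D`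
    (α : Fin p → ℝ) (hα : ∀ i, 0 < α i)
    (hUESi : ∀ i, ∀ x ∈ (⋂ j, D j) ∩ frontier (D i),
      Metric.ball (x - α i • nv i x) (α i) ∩ D i = ∅)
    -- (iii) uniform normal cone restricted to `D`
    (β : Fin p → ℝ) (hβ : ∀ i, β i ∈ Set.Ico (0 : ℝ) 1)
    (δ : Fin p → ℝ) (hδ : ∀ i, 0 < δ i)
    (hUNCi : ∀ i, ∀ x ∈ (⋂ j, D j) ∩ frontier (D i), ∃ l : EuclideanSpace ℝ (Fin m), ‖l‖ = 1 ∧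
      ∀ y ∈ (⋂ j, D j) ∩ frontier (D i), ‖y - x‖ ≤ δ i →
        ⟪nv i y, l⟫ ≥ Real.sqrt (1 - β i ^ 2))
    -- (iv) compatibility
    (β₀ : ℝ) (hβ₀ : β₀ > Real.sqrt (2 * sSup (Set.range β)))
    (hcompat : ∀ x ∈ frontier (⋂ j, D j), ∃ l : EuclideanSpace ℝ (Fin m), ‖l‖ = 1 ∧
      ∀ i, x ∈ frontier (D i) → ⟪l, nv i x⟫ ≥ β₀) :
    ∀ x ∈ frontier (⋂ j, D j),
      normalCone (⋂ j, D j) x =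
        {v | ‖v‖ = 1 ∧ ∃ c : Fin p → ℝ, (∀ i, 0 ≤ c i) ∧
          (∀ i, x ∉ frontier (D i) → c i = 0) ∧ v = ∑ i, c i • nv i x} :=
  stmt_5_general D hDcl nv hunit hcone α hα hUESi β δ β₀ hβ₀ hcompat
end
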